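/- For all real numbers r₁, r₂, r₃, there exists a triple (s₁, s₂, s₃) of real numbers with at least two equal coordinates satisfying s₁+s₂+s₃ = r₁+r₂+r₃ and s₁²+s₂²+s₃² = r₁²+r₂²+r₃², such that det H(s₁,s₂,s₃) ≤ det H(r₁,r₂,r₃), where H(r) is the symmetric 3×3 matrix with diagonal entries H₁₁ = H₂₂ = H₃₃ = 2r₁²+2r₂²+2r₃² and off-diagonal entries H₁₂ = r₃²−r₁²−r₂²−2r₁r₂, H₁₃ = r₂²−r₁²−r₃²−2r₁r₃, H₂₃ = r₁²−r₂²−r₃²−2r₂r₃. -/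
import Mathlib


noncomputable def Hmat (r₁ r₂ r₃ : ℝ) : Matrix (Fin 3) (Fin 3) ℝ :=
  !![2 * r₁ ^ 2 + 2 * r₂ ^ 2 + 2 * r₃ ^ 2,
     r₃ ^ 2 - r₁ ^ 2 - r₂ ^ 2 - 2 * r₁ * r₂,
     r₂ ^ 2 - r₁ ^ 2 - r₃ ^ 2 - 2 * r₁ * r₃;
     r₃ ^ 2 - r₁ ^ 2 - r₂ ^ 2 - 2 * r₁ * r₂,
     2 * r₁ ^ 2 + 2 * r₂ ^ 2 + 2 * r₃ ^ 2,
     r₁ ^ 2 - r₂ ^ 2 - r₃ ^ 2 - 2 * r₂ * r₃;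
     r₂ ^ 2 - r₁ ^ 2 - r₃ ^ 2 - 2 * r₁ * r₃,
     r₁ ^ 2 - r₂ ^ 2 - r₃ ^ 2 - 2 * r₂ * r₃,
     2 * r₁ ^ 2 + 2 * r₂ ^ 2 + 2 * r₃ ^ 2]

/-- For `e ≥ 0` with `3e² = 4(a²+ab+b²)`, we have `4ab(a+b) ≤ e³`. -/
lemma cube_aux (a b e : ℝ) (he : 0 ≤ e) (h : 3 * e ^ 2 = 4 * (a ^ 2 + a * b + b ^ 2)) :
    4 * a * b * (a + b) ≤ e ^ 3 := by
  have h1 : (a + b) ^ 2 ≤ e ^ 2 := by nlinarith [sq_nonneg (a - b)]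
  have h2 : a + b ≤ e := by nlinarith [sq_nonneg (e - (a + b)), sq_nonneg (e + (a + b))]
  have hz : 4 * (a ^ 2 + a * b + b ^ 2) - 3 * e ^ 2 = 0 := by linarith
  have key : e ^ 3 - 4 * a * b * (a + b) =
      (e - (a + b)) * (e + 2 * (a + b)) ^ 2 +
        (a + b) * (4 * (a ^ 2 + a * b + b ^ 2) - 3 * e ^ 2) := by ring
  nlinarith [mul_nonneg (by linarith : (0:ℝ) ≤ e - (a + b)) (sq_nonneg (e + 2 * (a + b))),
    mul_eq_zero_of_right (a + b) hz]

theorem stmt_10 (r₁ r₂ r₃ : ℝ) :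
    ∃ s₁ s₂ s₃ : ℝ,
      (s₁ = s₂ ∨ s₁ = s₃ ∨ s₂ = s₃) ∧
      s₁ + s₂ + s₃ = r₁ + r₂ + r₃ ∧
      s₁ ^ 2 + s₂ ^ 2 + s₃ ^ 2 = r₁ ^ 2 + r₂ ^ 2 + r₃ ^ 2 ∧
      (Hmat s₁ s₂ s₃).det ≤ (Hmat r₁ r₂ r₃).det := by
  set X := r₁ + r₂ + r₃ with hXdef
  have hnn : 0 ≤ 2 * ((r₁ - r₂) ^ 2 + (r₁ - r₃) ^ 2 + (r₂ - r₃) ^ 2) := by positivity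
  set e := Real.sqrt (2 * ((r₁ - r₂) ^ 2 + (r₁ - r₃) ^ 2 + (r₂ - r₃) ^ 2)) with hedef
  have he : 0 ≤ e := Real.sqrt_nonneg _
  have he2 : e ^ 2 = 6 * (r₁ ^ 2 + r₂ ^ 2 + r₃ ^ 2) - 2 * (r₁ + r₂ + r₃) ^ 2 := by
    rw [hedef, Real.sq_sqrt hnn]; ring
  have habc : 3 * e ^ 2 =
      4 * ((2 * r₁ - r₂ - r₃) ^ 2 + (2 * r₁ - r₂ - r₃) * (2 * r₂ - r₁ - r₃) +
        (2 * r₂ - r₁ - r₃) ^ 2) := by rw [he2]; ring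
  have habc' : 3 * e ^ 2 =
      4 * ((-(2 * r₁ - r₂ - r₃)) ^ 2 + (-(2 * r₁ - r₂ - r₃)) * (-(2 * r₂ - r₁ - r₃)) +
        (-(2 * r₂ - r₁ - r₃)) ^ 2) := by rw [he2]; ring
  rcases le_total 0 X with hX | hX
  · refine ⟨(2 * X + e) / 6, (2 * X + e) / 6, (X - e) / 3, Or.inl rfl, by ring, ?_, ?_⟩
    · linear_combination he2 / 6
    · have hkey : 0 ≤ e ^ 3 + 4 * ((2 * r₁ - r₂ - r₃) * (2 * r₂ - r₁ - r₃) *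
          (2 * r₃ - r₁ - r₂)) := by
        have := cube_aux (2 * r₁ - r₂ - r₃) (2 * r₂ - r₁ - r₃) e he habc
        nlinarith [this]
      have hm : 0 ≤ (r₁ + r₂ + r₃) ^ 3 * (e ^ 3 + 4 * ((2 * r₁ - r₂ - r₃) *
          (2 * r₂ - r₁ - r₃) * (2 * r₃ - r₁ - r₂))) :=
        mul_nonneg (pow_nonneg hX 3) hkey
      have hd : (Hmat ((2 * X + e) / 6) ((2 * X + e) / 6) ((X - e) / 3)).det -
          (Hmat r₁ r₂ r₃).det =
          -(4 / 27) * ((r₁ + r₂ + r₃) ^ 3 * (e ^ 3 + 4 * ((2 * r₁ - r₂ - r₃) *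
            (2 * r₂ - r₁ - r₃) * (2 * r₃ - r₁ - r₂)))) := by
        simp [Hmat, Matrix.det_fin_three]
        rw [hXdef]
        linear_combination ((1/27)*e^4 + (4/27)*r₃^2*e^2 + (19/27)*r₃^4 + (-4/27)*r₂*r₃*e^2 + (-20/27)*r₂*r₃^3 + (4/27)*r₂^2*e^2 + (22/9)*r₂^2*r₃^2 + (-20/27)*r₂^3*r₃ + (19/27)*r₂^4 + (-4/27)*r₁*r₃*e^2 + (-20/27)*r₁*r₃^3 + (-4/27)*r₁*r₂*e^2 + (4/3)*r₁*r₂*r₃^2 + (4/3)*r₁*r₂^2*r₃ + (-20/27)*r₁*r₂^3 + (4/27)*r₁^2*e^2 + (22/9)*r₁^2*r₃^2 + (4/3)*r₁^2*r₂*r₃ + (22/9)*r₁^2*r₂^2 + (-20/27)*r₁^3*r₃ + (-20/27)*r₁^3*r₂ + (19/27)*r₁^4) * he2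
      linarith [hd, hm]
  · refine ⟨(2 * X - e) / 6, (2 * X - e) / 6, (X + e) / 3, Or.inl rfl, by ring, ?_, ?_⟩
    · linear_combination he2 / 6
    · have hkey : 0 ≤ e ^ 3 - 4 * ((2 * r₁ - r₂ - r₃) * (2 * r₂ - r₁ - r₃) *
          (2 * r₃ - r₁ - r₂)) := by
        have := cube_aux (-(2 * r₁ - r₂ - r₃)) (-(2 * r₂ - r₁ - r₃)) e he habc'
        nlinarith [this]
      have hm : 0 ≤ (-(r₁ + r₂ + r₃)) ^ 3 * (e ^ 3 - 4 * ((2 * r₁ - r₂ - r₃) *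
          (2 * r₂ - r₁ - r₃) * (2 * r₃ - r₁ - r₂))) :=
        mul_nonneg (pow_nonneg (by linarith) 3) hkey
      have hd : (Hmat ((2 * X - e) / 6) ((2 * X - e) / 6) ((X + e) / 3)).det -
          (Hmat r₁ r₂ r₃).det =
          -(4 / 27) * ((-(r₁ + r₂ + r₃)) ^ 3 * (e ^ 3 - 4 * ((2 * r₁ - r₂ - r₃) *
            (2 * r₂ - r₁ - r₃) * (2 * r₃ - r₁ - r₂)))) := by
        simp [Hmat, Matrix.det_fin_three]
        rw [hXdef]
        linear_combination ((1/27)*e^4 + (4/27)*r₃^2*e^2 + (19/27)*r₃^4 + (-4/27)*r₂*r₃*e^2 + (-20/27)*r₂*r₃^3 + (4/27)*r₂^2*e^2 + (22/9)*r₂^2*r₃^2 + (-20/27)*r₂^3*r₃ + (19/27)*r₂^4 + (-4/27)*r₁*r₃*e^2 + (-20/27)*r₁*r₃^3 + (-4/27)*r₁*r₂*e^2 + (4/3)*r₁*r₂*r₃^2 + (4/3)*r₁*r₂^2*r₃ + (-20/27)*r₁*r₂^3 + (4/27)*r₁^2*e^2 + (22/9)*r₁^2*r₃^2 + (4/3)*r₁^2*r₂*r₃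 + (22/9)*r₁^2*r₂^2 + (-20/27)*r₁^3*r₃ + (-20/27)*r₁^3*r₂ + (19/27)*r₁^4) * he2
      linarith [hd, hm]
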